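/- arXiv:1010.1133 — 2 statements merged into one kernel-verified Lean document; each statement's English description precedes it below -/
import Mathlib

section
/- With h = g ∘ ρ^{-1} as above, there exists a unique r_c ∈ (0, 2/π) such that h'' > 0 on (0, r_c), h''(r_c) = 0, and h'' < 0 on (r_c, 1). Specifically, h''(r) = 2(φ sin φ + cos φ)/(φ² ρ'(φ)) with φ = ρ^{-1}(r), and there is a unique φ_c ∈ (π/2, π) with φ_c sin φ_c + cos φ_c = 0; moreover φ sin φ + cos φ > 0 if and only if 0 < φ < φ_c, and r_c = ρ(φ_c) (note ρ' < 0 on (0,π)). -/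
/-!
The inverse function theorem gives `h'(r) = -2 cos φ / φ` and
`h''(r) = 2 (φ sin φ + cos φ) / (φ² ρ'(φ))` for `φ = ρ⁻¹(r)`, `0 < r < 1`; at `r = 0`,
i.e. `φ = π`, the one-sided derivatives exist and are the limits of these expressions.
Since `φ cos φ < sin φ`, `ρ' < 0` on `(0, π]`, so `h''(r)` has the sign opposite to
`F(φ) = φ sin φ + cos φ`. Now `F > 0` on `(0, π/2]` and `F' = φ cos φ < 0` on `(π/2, π)`,
with `F(π/2) = π/2` and `F(π) = -1`, so `F` has a single zero `φ_c`, and as `ρ` is decreasing,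
`r_c = ρ(φ_c) < ρ(π/2) = 2/π`.
-/

open scoped Real

noncomputable section

/-- The function `g(φ) = (2φ - sin 2φ)/(2φ²)`, `g(0) = 0`. -/
def gProf (φ : ℝ) : ℝ := if φ = 0 then 0 else (2 * φ - Real.sin (2 * φ)) / (2 * φ ^ 2)

/-- The function `ρ(φ) = sin φ / φ`, `ρ(0) = 1`. -/
def rhoProf (φ : ℝ) : ℝ := if φ = 0 then 1 else Real.sin φ / φ

/-- The inverse `ρ⁻¹ : [0,1] → [0,π]` of `ρ` on `[0,π]`. -/
def rhoInv : ℝ → ℝ := Function.invFunOn rhoProf (Set.Icc 0 π)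

/-- The profile function `h = g ∘ ρ⁻¹` of the unit Carnot–Carathéodory ball:
`B̄(0,1) = {[z,t] : ‖z‖ ≤ 1, |t| ≤ h(‖z‖)}`. -/
def hProf : ℝ → ℝ := fun r => gProf (rhoInv r)

/-- The second derivative `h''` of the profile function (derivatives taken within
`[0,1]`). -/
def hProf'' : ℝ → ℝ := derivWithin (derivWithin hProf (Set.Icc 0 1)) (Set.Icc 0 1)

open Set Filter Function Topology Real

theorem Set.BijOn.continuousOn_invFunOn {X Y : Type*} [TopologicalSpace X] [TopologicalSpace Y]
    [T2Space Y] [Nonempty X] {f : X → Y} {s : Set X} {t : Set Y} (hs : IsCompact s)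
    (hf : ContinuousOn f s) (hbij : BijOn f s t) : ContinuousOn (invFunOn f s) t := by
  have : CompactSpace s := isCompact_iff_compactSpace.mp hs
  let e : s ≃ₜ t :=
    (hf.mapsToRestrict hbij.mapsTo).homeoOfEquivCompactToT2 (f := hbij.equiv f)
  have he : t.domRestrict (invFunOn f s) = Subtype.val ∘ e.symm := by
    funext y
    have hy : f (e.symm y) = y := congrArg Subtype.val (e.apply_symm_apply y)
    simpa [hy] using hbij.invOn_invFunOn.1 (e.symm y).2
  rw [continuousOn_iff_continuous_domRestrict, he]
  exact continuous_subtype_val.comp e.symm.continuous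

lemma mul_cos_lt_sin {φ : ℝ} (h0 : 0 < φ) (hπ : φ ≤ π) : φ * cos φ < sin φ := by
  rcases lt_or_ge φ (π / 2) with h | h
  · have hcos : 0 < cos φ := cos_pos_of_mem_Ioo ⟨by linarith, h⟩
    have := lt_tan h0 h
    rwa [tan_eq_sin_div_cos, lt_div_iff₀ hcos] at this
  · have hcos : cos φ ≤ 0 := cos_nonpos_of_pi_div_two_le_of_le h (by linarith)
    have hsin : 0 ≤ sin φ := sin_nonneg_of_nonneg_of_le_pi h0.le hπ
    rcases hcos.lt_or_eq with hcos | hcos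
    · nlinarith [mul_neg_of_pos_of_neg h0 hcos]
    · have := sin_sq_add_cos_sq φ
      rw [hcos] at this ⊢
      nlinarith

lemma rhoProf_eq_sinc : rhoProf = sinc := rfl

lemma rhoProf_zero : rhoProf 0 = 1 := sinc_zero

lemma rhoProf_of_ne_zero {φ : ℝ} (hφ : φ ≠ 0) : rhoProf φ = sin φ / φ :=
  sinc_of_ne_zero hφ

lemma rhoProf_pi : rhoProf π = 0 := by simp [rhoProf_of_ne_zero pi_ne_zero]

lemma rhoProf_pi_div_two : rhoProf (π / 2) = 2 / π := by
  rw [rhoProf_of_ne_zero (by positivity), sin_pi_div_two, one_div_div]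

def rhoDeriv (φ : ℝ) : ℝ := (φ * cos φ - sin φ) / φ ^ 2

lemma hasDerivAt_rhoProf {φ : ℝ} (hφ : φ ≠ 0) : HasDerivAt rhoProf (rhoDeriv φ) φ := by
  have h := (hasDerivAt_sin φ).div (hasDerivAt_id φ) hφ
  rw [id, mul_one, mul_comm] at h
  refine h.congr_of_eventuallyEq ?_
  filter_upwards [isOpen_ne.mem_nhds hφ] with y hy
  exact rhoProf_of_ne_zero hy

lemma rhoDeriv_neg {φ : ℝ} (h0 : 0 < φ) (hπ : φ ≤ π) : rhoDeriv φ < 0 :=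
  div_neg_of_neg_of_pos (by linarith [mul_cos_lt_sin h0 hπ]) (by positivity)

lemma sq_mul_rhoDeriv_neg {φ : ℝ} (h0 : 0 < φ) (hπ : φ ≤ π) : φ ^ 2 * rhoDeriv φ < 0 :=
  mul_neg_of_pos_of_neg (by positivity) (rhoDeriv_neg h0 hπ)

lemma derivWithin_rhoProf {φ : ℝ} (hφ : φ ∈ Ioc 0 π) :
    derivWithin rhoProf (Icc 0 π) φ = rhoDeriv φ :=
  (hasDerivAt_rhoProf hφ.1.ne').hasDerivWithinAt.derivWithin
    (uniqueDiffOn_Icc pi_pos φ (Ioc_subset_Icc_self hφ))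

lemma strictAntiOn_rhoProf : StrictAntiOn rhoProf (Icc 0 π) := by
  refine strictAntiOn_of_deriv_neg (convex_Icc 0 π) continuous_sinc.continuousOn fun φ hφ => ?_
  rw [interior_Icc] at hφ
  rw [(hasDerivAt_rhoProf hφ.1.ne').deriv]
  exact rhoDeriv_neg hφ.1 hφ.2.le

lemma bijOn_rhoProf : BijOn rhoProf (Icc 0 π) (Icc 0 1) := by
  have h := continuous_sinc.continuousOn.image_Icc_of_antitoneOn pi_pos.le
    strictAntiOn_rhoProf.antitoneOn
  rw [← rhoProf_eq_sinc, rhoProf_pi, rhoProf_zero] at h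
  exact h ▸ strictAntiOn_rhoProf.injOn.bijOn_image

lemma rhoInv_mem_Icc {r : ℝ} (hr : r ∈ Icc 0 1) : rhoInv r ∈ Icc 0 π :=
  bijOn_rhoProf.surjOn.mapsTo_invFunOn hr

lemma rhoInv_rhoProf {φ : ℝ} (hφ : φ ∈ Icc 0 π) : rhoInv (rhoProf φ) = φ :=
  bijOn_rhoProf.invOn_invFunOn.1 hφ

lemma rhoProf_rhoInv {r : ℝ} (hr : r ∈ Icc 0 1) : rhoProf (rhoInv r) = r :=
  bijOn_rhoProf.invOn_invFunOn.2 hr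

lemma rhoInv_zero : rhoInv 0 = π := by
  simpa [rhoProf_pi] using rhoInv_rhoProf (right_mem_Icc.2 pi_pos.le)

lemma rhoInv_mem_Ioc {r : ℝ} (hr : r ∈ Ico 0 1) : rhoInv r ∈ Ioc 0 π := by
  have hmem := rhoInv_mem_Icc (Ico_subset_Icc_self hr)
  refine ⟨hmem.1.lt_of_ne fun h => hr.2.ne ?_, hmem.2⟩
  rw [← rhoProf_rhoInv (Ico_subset_Icc_self hr), ← h, rhoProf_zero]

lemma lt_rhoProf_iff {r φ : ℝ} (hr : r ∈ Icc 0 1) (hφ : φ ∈ Icc 0 π) :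
    r < rhoProf φ ↔ φ < rhoInv r := by
  conv_lhs => rw [← rhoProf_rhoInv hr]
  exact strictAntiOn_rhoProf.lt_iff_gt (rhoInv_mem_Icc hr) hφ

lemma rhoProf_lt_iff {r φ : ℝ} (hr : r ∈ Icc 0 1) (hφ : φ ∈ Icc 0 π) :
    rhoProf φ < r ↔ rhoInv r < φ := by
  conv_lhs => rw [← rhoProf_rhoInv hr]
  exact strictAntiOn_rhoProf.lt_iff_gt hφ (rhoInv_mem_Icc hr)

lemma continuousOn_rhoInv : ContinuousOn rhoInv (Icc 0 1) :=
  bijOn_rhoProf.continuousOn_invFunOn isCompact_Icc continuous_sinc.continuousOn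

lemma hasDerivAt_rhoInv {r : ℝ} (hr : r ∈ Ioo 0 1) :
    HasDerivAt rhoInv (rhoDeriv (rhoInv r))⁻¹ r := by
  have hφ := rhoInv_mem_Ioc (Ioo_subset_Ico_self hr)
  refine HasDerivAt.of_local_left_inverse (f := rhoProf)
    (continuousOn_rhoInv.continuousAt (Icc_mem_nhds hr.1 hr.2))
    (hasDerivAt_rhoProf hφ.1.ne') (rhoDeriv_neg hφ.1 hφ.2).ne ?_
  filter_upwards [Ioo_mem_nhds hr.1 hr.2] with y hy
  exact rhoProf_rhoInv (Ioo_subset_Icc_self hy)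

lemma hasDerivWithinAt_comp_rhoInv {F F' : ℝ → ℝ}
    (hF : ∀ φ ∈ Ioc 0 π, HasDerivAt F (F' φ) φ) (hF' : ContinuousAt F' π)
    {r : ℝ} (hr : r ∈ Ico 0 1) :
    HasDerivWithinAt (F ∘ rhoInv) (F' (rhoInv r) / rhoDeriv (rhoInv r)) (Icc 0 1) r := by
  have hinterior : ∀ r ∈ Ioo (0 : ℝ) 1,
      HasDerivAt (F ∘ rhoInv) (F' (rhoInv r) / rhoDeriv (rhoInv r)) r := fun r hr =>
    (hF _ (rhoInv_mem_Ioc (Ioo_subset_Ico_self hr))).comp r (hasDerivAt_rhoInv hr)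
  rcases hr.1.eq_or_lt with rfl | hr0
  · rw [rhoInv_zero]
    have hcont : ContinuousWithinAt rhoInv (Ioo 0 1) 0 :=
      (continuousOn_rhoInv 0 (left_mem_Icc.2 zero_le_one)).mono Ioo_subset_Icc_self
    have hlim : Tendsto rhoInv (𝓝[Ioo 0 1] 0) (𝓝 π) := rhoInv_zero ▸ hcont
    have hFcont : ContinuousAt F (rhoInv 0) :=
      rhoInv_zero ▸ (hF π ⟨pi_pos, le_rfl⟩).continuousAt
    refine (hasDerivWithinAt_Ici_of_tendsto_deriv (s := Ioo 0 1)
      (fun r hr => (hinterior r hr).differentiableAt.differentiableWithinAt)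
      (hFcont.comp_continuousWithinAt hcont) (Ioo_mem_nhdsGT one_pos) ?_).mono
      Icc_subset_Ici_self
    rw [← nhdsWithin_Ioo_eq_nhdsGT one_pos]
    have hquot : ContinuousAt (fun φ => F' φ / rhoDeriv φ) π :=
      hF'.div (by unfold rhoDeriv; fun_prop (disch := positivity)) (rhoDeriv_neg pi_pos le_rfl).ne
    refine (hquot.tendsto.comp hlim).congr' ?_
    filter_upwards [self_mem_nhdsWithin] with r hr
    exact (hinterior r hr).deriv.symm
  · exact (hinterior r ⟨hr0, hr.2⟩).hasDerivWithinAt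

lemma hasDerivAt_gProf {φ : ℝ} (hφ : φ ≠ 0) :
    HasDerivAt gProf (-2 * cos φ / φ * rhoDeriv φ) φ := by
  have hnum : HasDerivAt (fun y => 2 * y - sin (2 * y)) (2 - cos (2 * φ) * 2) φ := by
    have h2 : HasDerivAt (fun y : ℝ => 2 * y) 2 φ := by
      simpa using (hasDerivAt_id φ).const_mul 2
    exact h2.sub ((hasDerivAt_sin (2 * φ)).comp φ h2)
  have hden : HasDerivAt (fun y : ℝ => 2 * y ^ 2) (2 * (2 * φ)) φ := by
    simpa using (hasDerivAt_pow 2 φ).const_mul 2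
  refine ((hnum.div hden (by positivity)).congr_deriv ?_).congr_of_eventuallyEq ?_
  · rw [rhoDeriv, cos_two_mul, sin_two_mul]
    field_simp
    ring
  · filter_upwards [isOpen_ne.mem_nhds hφ] with y hy
    simp [gProf, hy]

lemma derivWithin_hProf {r : ℝ} (hr : r ∈ Ico 0 1) :
    derivWithin hProf (Icc 0 1) r = -2 * cos (rhoInv r) / rhoInv r := by
  have hφ := rhoInv_mem_Ioc hr
  have h := hasDerivWithinAt_comp_rhoInv (F' := fun φ => -2 * cos φ / φ * rhoDeriv φ)
    (fun φ hφ => hasDerivAt_gProf hφ.1.ne')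
    (by unfold rhoDeriv; fun_prop (disch := positivity)) hr
  rw [mul_div_cancel_right₀ _ (rhoDeriv_neg hφ.1 hφ.2).ne] at h
  exact h.derivWithin (uniqueDiffOn_Icc one_pos r (Ico_subset_Icc_self hr))

lemma hProf''_eq {r : ℝ} (hr : r ∈ Ico 0 1) :
    hProf'' r = 2 * (rhoInv r * sin (rhoInv r) + cos (rhoInv r)) /
      (rhoInv r ^ 2 * rhoDeriv (rhoInv r)) := by
  have hderiv : ∀ φ ∈ Ioc 0 π,
      HasDerivAt (fun φ => -2 * cos φ / φ) (2 * (φ * sin φ + cos φ) / φ ^ 2) φ := by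
    intro φ hφ
    exact (((hasDerivAt_cos φ).const_mul (-2)).div (hasDerivAt_id' φ) hφ.1.ne').congr_deriv
      (by ring)
  have h := hasDerivWithinAt_comp_rhoInv hderiv
    (by fun_prop (disch := positivity)) hr
  rw [div_div] at h
  refine (h.congr_of_eventuallyEq ?_ (derivWithin_hProf hr)).derivWithin
    (uniqueDiffOn_Icc one_pos r (Ico_subset_Icc_self hr))
  filter_upwards [inter_mem_nhdsWithin (Icc 0 1) (Iio_mem_nhds hr.2)] with y hy
  exact derivWithin_hProf ⟨hy.1.1, hy.2⟩

lemma mul_sin_add_cos_pos {φ : ℝ} (h0 : 0 < φ) (h : φ ≤ π / 2) :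
    0 < φ * sin φ + cos φ := by
  have hsin : 0 < sin φ := sin_pos_of_pos_of_lt_pi h0 (by linarith [pi_pos])
  have hcos : 0 ≤ cos φ := cos_nonneg_of_mem_Icc ⟨by linarith, h⟩
  positivity

lemma strictAntiOn_mul_sin_add_cos :
    StrictAntiOn (fun φ => φ * sin φ + cos φ) (Icc (π / 2) π) := by
  refine strictAntiOn_of_deriv_neg (convex_Icc _ _) (by fun_prop) fun φ hφ => ?_
  rw [interior_Icc] at hφ
  have hd : HasDerivAt (fun φ => φ * sin φ + cos φ) (φ * cos φ) φ :=
    (((hasDerivAt_id' φ).mul (hasDerivAt_sin φ)).add (hasDerivAt_cos φ)).congr_deriv (by ring)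
  rw [hd.deriv]
  exact mul_neg_of_pos_of_neg (by linarith [hφ.1, pi_pos])
    (cos_neg_of_pi_div_two_lt_of_lt hφ.1 (by linarith [hφ.2, pi_pos]))

lemma exists_mul_sin_add_cos_eq_zero : ∃ φ ∈ Ioo (π / 2) π, φ * sin φ + cos φ = 0 := by
  refine intermediate_value_Ioo' (by linarith [pi_pos]) (by fun_prop) ?_
  simp only [sin_pi, cos_pi, sin_pi_div_two, cos_pi_div_two]
  constructor <;> linarith [pi_pos]

lemma mul_sin_add_cos_pos_iff
    {φc : ℝ} (hφc : φc ∈ Ioo (π / 2) π) (hroot : φc * sin φc + cos φc = 0)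
    {φ : ℝ} (hφ : φ ∈ Ioc 0 π) :
    0 < φ * sin φ + cos φ ↔ φ < φc := by
  rcases le_or_gt φ (π / 2) with h | h
  · exact iff_of_true (mul_sin_add_cos_pos hφ.1 h) (h.trans_lt hφc.1)
  · conv_lhs => rw [← hroot]
    exact strictAntiOn_mul_sin_add_cos.lt_iff_gt ⟨hφc.1.le, hφc.2.le⟩ ⟨h.le, hφ.2⟩

lemma mul_sin_add_cos_neg_iff
    {φc : ℝ} (hφc : φc ∈ Ioo (π / 2) π) (hroot : φc * sin φc + cos φc = 0)
    {φ : ℝ} (hφ : φ ∈ Ioc 0 π) :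
    φ * sin φ + cos φ < 0 ↔ φc < φ := by
  rcases le_or_gt φ (π / 2) with h | h
  · exact iff_of_false (mul_sin_add_cos_pos hφ.1 h).not_gt (h.trans hφc.1.le).not_gt
  · conv_lhs => rw [← hroot]
    exact strictAntiOn_mul_sin_add_cos.lt_iff_gt ⟨h.le, hφ.2⟩ ⟨hφc.1.le, hφc.2.le⟩

lemma hProf''_pos_iff
    {φc : ℝ} (hφc : φc ∈ Ioo (π / 2) π) (hroot : φc * sin φc + cos φc = 0)
    {r : ℝ} (hr : r ∈ Ioo 0 1) :
    0 < hProf'' r ↔ r < rhoProf φc := by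
  have hφ := rhoInv_mem_Ioc (Ioo_subset_Ico_self hr)
  rw [hProf''_eq (Ioo_subset_Ico_self hr),
    lt_div_iff_of_neg (sq_mul_rhoDeriv_neg hφ.1 hφ.2), zero_mul,
    lt_rhoProf_iff (Ioo_subset_Icc_self hr) ⟨by linarith [hφc.1, pi_pos], hφc.2.le⟩,
    ← mul_sin_add_cos_neg_iff hφc hroot hφ]
  constructor <;> intro h <;> linarith

lemma hProf''_neg_iff
    {φc : ℝ} (hφc : φc ∈ Ioo (π / 2) π) (hroot : φc * sin φc + cos φc = 0)
    {r : ℝ} (hr : r ∈ Ioo 0 1) :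
    hProf'' r < 0 ↔ rhoProf φc < r := by
  have hφ := rhoInv_mem_Ioc (Ioo_subset_Ico_self hr)
  rw [hProf''_eq (Ioo_subset_Ico_self hr),
    div_lt_iff_of_neg (sq_mul_rhoDeriv_neg hφ.1 hφ.2), zero_mul,
    rhoProf_lt_iff (Ioo_subset_Icc_self hr) ⟨by linarith [hφc.1, pi_pos], hφc.2.le⟩,
    ← mul_sin_add_cos_pos_iff hφc hroot hφ]
  constructor <;> intro h <;> linarith

/-- There is a unique `φ_c ∈ (π/2,π)` with `φ_c sin φ_c + cos φ_c = 0`; moreover for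
`φ ∈ (0,π]`, `φ sin φ + cos φ > 0` iff `φ < φ_c`. Setting `r_c = ρ(φ_c) ∈ (0,2/π)`, one
has `h'' > 0` on `(0,r_c)`, `h''(r_c) = 0` and `h'' < 0` on `(r_c,1)`, with the explicit
formula `h''(r) = 2 (φ sin φ + cos φ)/(φ² ρ'(φ))`, `φ = ρ⁻¹(r)`; and `r_c` is the unique
point of `(0,2/π)` with these sign properties. -/
theorem stmt7 :
    ∃ φc ∈ Set.Ioo (π / 2) π,
      φc * Real.sin φc + Real.cos φc = 0 ∧
      (∀ φ ∈ Set.Ioo (π / 2) π, φ * Real.sin φ + Real.cos φ = 0 → φ = φc) ∧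
      (∀ φ ∈ Set.Ioc (0 : ℝ) π, (0 < φ * Real.sin φ + Real.cos φ ↔ φ < φc)) ∧
      rhoProf φc ∈ Set.Ioo 0 (2 / π) ∧
      (∀ r ∈ Set.Ioo 0 (rhoProf φc), 0 < hProf'' r) ∧
      hProf'' (rhoProf φc) = 0 ∧
      (∀ r ∈ Set.Ioo (rhoProf φc) 1, hProf'' r < 0) ∧
      (∀ r ∈ Set.Ico (0 : ℝ) 1,
        hProf'' r = 2 * (rhoInv r * Real.sin (rhoInv r) + Real.cos (rhoInv r)) /
          ((rhoInv r) ^ 2 * derivWithin rhoProf (Set.Icc 0 π) (rhoInv r))) ∧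
      (∀ rc ∈ Set.Ioo (0 : ℝ) (2 / π),
        ((∀ r ∈ Set.Ioo 0 rc, 0 < hProf'' r) ∧ hProf'' rc = 0 ∧
          (∀ r ∈ Set.Ioo rc 1, hProf'' r < 0)) → rc = rhoProf φc) := by
  obtain ⟨φc, hφc, hroot⟩ := exists_mul_sin_add_cos_eq_zero
  have hφc' : φc ∈ Icc 0 π := ⟨by linarith [hφc.1, pi_pos], hφc.2.le⟩
  have hrc_pos : 0 < rhoProf φc := rhoProf_pi ▸
    strictAntiOn_rhoProf hφc' (right_mem_Icc.2 pi_pos.le) hφc.2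
  have hrc_lt : rhoProf φc < 2 / π := rhoProf_pi_div_two ▸
    strictAntiOn_rhoProf ⟨by positivity, by linarith [pi_pos]⟩ hφc' hφc.1
  have hrc_lt_one : rhoProf φc < 1 := rhoProf_zero ▸
    strictAntiOn_rhoProf (left_mem_Icc.2 pi_pos.le) hφc' (by linarith [hφc.1, pi_pos])
  have hzero : hProf'' (rhoProf φc) = 0 := by
    rw [hProf''_eq ⟨hrc_pos.le, hrc_lt_one⟩, rhoInv_rhoProf hφc', hroot, mul_zero, zero_div]
  refine ⟨φc, hφc, hroot, fun φ hφ h => ?_,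
    fun φ hφ => mul_sin_add_cos_pos_iff hφc hroot hφ, ⟨hrc_pos, hrc_lt⟩,
    fun r hr => (hProf''_pos_iff hφc hroot ⟨hr.1, hr.2.trans hrc_lt_one⟩).2 hr.2, hzero,
    fun r hr => (hProf''_neg_iff hφc hroot ⟨hrc_pos.trans hr.1, hr.2⟩).2 hr.1,
    fun r hr => by rw [hProf''_eq hr, derivWithin_rhoProf (rhoInv_mem_Ioc hr)], ?_⟩
  · exact strictAntiOn_mul_sin_add_cos.injOn ⟨hφ.1.le, hφ.2.le⟩ ⟨hφc.1.le, hφc.2.le⟩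
      (h.trans hroot.symm)
  · rintro rc hrc ⟨hpos, hrc_zero, -⟩
    refine le_antisymm (not_lt.1 fun h => ?_) (not_lt.1 fun h => ?_)
    · exact (hpos _ ⟨hrc_pos, h⟩).ne' hzero
    · exact ((hProf''_pos_iff hφc hroot ⟨hrc.1, h.trans hrc_lt_one⟩).2 h).ne' hrc_zero
end
end

section
/- For any p ∈ H^n and any p₁, p₂ ∈ H^n with z_{p₁} = z_{p₂}, one has d(p,q) ≤ max(d(p,p₁), d(p,p₂)) for all q on the vertical segment L_{p₁,p₂} joining p₁ to p₂. -/
open scoped Real ENNReal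
open MeasureTheory

noncomputable section

/-- The Heisenberg group `ℍⁿ`, identified with `ℂⁿ × ℝ` (with the Euclidean `ℓ²` norm on
the `ℂⁿ` factor). -/
abbrev Heis (n : ℕ) : Type := EuclideanSpace ℂ (Fin n) × ℝ

/-- Borel σ-algebra on `ℂⁿ`. -/
instance (n : ℕ) : MeasurableSpace (EuclideanSpace ℂ (Fin n)) := borel _

instance (n : ℕ) : BorelSpace (EuclideanSpace ℂ (Fin n)) := ⟨rfl⟩

/-- Lebesgue measure on `ℂⁿ`. -/
instance (n : ℕ) : MeasureSpace (EuclideanSpace ℂ (Fin n)) :=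
  ⟨Measure.map ((WithLp.equiv 2 (Fin n → ℂ)).symm) volume⟩

namespace Heis

/-- The Hermitian product `z ⬝ conj w = ∑ zⱼ conj(wⱼ)`. -/
def herm {n : ℕ} (z w : EuclideanSpace ℂ (Fin n)) : ℂ :=
  ∑ j, z j * (starRingEnd ℂ) (w j)

/-- The Heisenberg group law `[z,t]·[z',t'] = [z+z', t+t'+2 Im (z ⬝ conj z')]`. -/
def mul {n : ℕ} (p q : Heis n) : Heis n :=
  (p.1 + q.1, p.2 + q.2 + 2 * (herm p.1 q.1).im)

/-- Dilations `δ_λ [z,t] = [λ z, λ² t]`. -/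
def dilation {n : ℕ} (l : ℝ) (p : Heis n) : Heis n := (l • p.1, l ^ 2 * p.2)

/-- A `C¹` horizontal curve in the Heisenberg group: at every point the tangent vector lies
in the horizontal subbundle spanned by the left-invariant fields
`X_j = ∂_{x_j} + 2 y_j ∂_t`, `Y_j = ∂_{y_j} - 2 x_j ∂_t`, which amounts to
`t'(s) = 2 Im (z(s) ⬝ conj z'(s))`. -/
structure HorizCurve (n : ℕ) where
  z : ℝ → EuclideanSpace ℂ (Fin n)
  t : ℝ → ℝ
  z' : ℝ → EuclideanSpace ℂ (Fin n)
  hz : ∀ s : ℝ, HasDerivAt z (z' s) s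
  ht : ∀ s : ℝ, HasDerivAt t (2 * (herm (z s) (z' s)).im) s
  hz' : Continuous z'

/-- The sub-Riemannian length of a horizontal curve (the metric `g` makes the horizontal
frame orthonormal, so the length is the integral of the Euclidean norm of `z'`). -/
def HorizCurve.length {n : ℕ} (γ : HorizCurve n) : ℝ :=
  ∫ s in (0:ℝ)..1, ‖γ.z' s‖

/-- The Carnot–Carathéodory distance: the infimum of lengths of horizontal curves
joining `p` to `q`. -/
def ccDist {n : ℕ} (p q : Heis n) : ℝ :=
  sInf { L : ℝ | ∃ γ : HorizCurve n, γ.z 0 = p.1 ∧ γ.t 0 = p.2 ∧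
      γ.z 1 = q.1 ∧ γ.t 1 = q.2 ∧ L = γ.length }

/-- Open CC-ball. -/
def ccBall {n : ℕ} (p : Heis n) (r : ℝ) : Set (Heis n) := { q | ccDist p q < r }

/-- Closed CC-ball. -/
def ccClosedBall {n : ℕ} (p : Heis n) (r : ℝ) : Set (Heis n) := { q | ccDist p q ≤ r }

/-- CC-diameter of a set. -/
def ccDiam {n : ℕ} (F : Set (Heis n)) : ℝ :=
  sSup { r : ℝ | ∃ p ∈ F, ∃ q ∈ F, r = ccDist p q }

/-- A set is CC-bounded if the pairwise CC-distances of its points are bounded. -/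
def ccBounded {n : ℕ} (F : Set (Heis n)) : Prop :=
  ∃ M : ℝ, ∀ p ∈ F, ∀ q ∈ F, ccDist p q ≤ M

/-- The vertical segment joining two points with the same `ℂⁿ`-component. -/
def vseg {n : ℕ} (p q : Heis n) : Set (Heis n) :=
  { x | x.1 = p.1 ∧ x.2 ∈ Set.uIcc p.2 q.2 }

/-- The `t`-convex hull of a set. -/
def tco {n : ℕ} (F : Set (Heis n)) : Set (Heis n) :=
  { x | ∃ p₁ ∈ F, ∃ p₂ ∈ F, p₁.1 = p₂.1 ∧ x ∈ vseg p₁ p₂ }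

/-- A set is `t`-convex if it contains the vertical segment joining any two of its points
having the same `ℂⁿ`-component. -/
def TConvex {n : ℕ} (E : Set (Heis n)) : Prop :=
  ∀ p ∈ E, ∀ q ∈ E, p.1 = q.1 → vseg p q ⊆ E

/-- The rotation `r_θ [z,t] = [(e^{iθ₁} z₁, …, e^{iθₙ} zₙ), t]`. -/
def rot {n : ℕ} (θ : Fin n → ℝ) (p : Heis n) : Heis n :=
  ((WithLp.equiv 2 (Fin n → ℂ)).symm fun j => Complex.exp ((θ j : ℂ) * Complex.I) * p.1 j,
    p.2)

/-- Rotationally invariant sets: the class `𝓡`. -/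
def RotInvariant {n : ℕ} (F : Set (Heis n)) : Prop :=
  ∀ θ : Fin n → ℝ, rot θ '' F ⊆ F

/-- The reflection `σ [z,t] = [conj z, t]`. -/
def sigmaRefl {n : ℕ} (p : Heis n) : Heis n :=
  ((WithLp.equiv 2 (Fin n → ℂ)).symm fun j => (starRingEnd ℂ) (p.1 j), p.2)

/-- The Steiner symmetrization of a set with respect to the `ℂⁿ`-plane. -/
def steiner {n : ℕ} (F : Set (Heis n)) : Set (Heis n) :=
  { x | x.1 ∈ Prod.fst '' F ∧
      2 * |x.2| ≤ (volume { s : ℝ | ((x.1, s) : Heis n) ∈ F }).toReal }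

/-- The isodiametric constant `C_I`. -/
def CI (n : ℕ) : ℝ :=
  sSup { x : ℝ | ∃ F : Set (Heis n), ccBounded F ∧ 0 < ccDiam F ∧
    x = (volume F).toReal / (ccDiam F) ^ (2 * n + 2) }

/-- The isodiametric constant `C_{I,𝓡}` for the restricted problem in the class `𝓡`. -/
def CIR (n : ℕ) : ℝ :=
  sSup { x : ℝ | ∃ F : Set (Heis n), RotInvariant F ∧ ccBounded F ∧ 0 < ccDiam F ∧
    x = (volume F).toReal / (ccDiam F) ^ (2 * n + 2) }

end Heis

/-! A horizontal curve is determined by its projection `z` to `ℂⁿ` and its initial height, the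
final height being `t₀ + ∫₀¹ 2 Im (z ⬝ conj z')`; along a family `z + s • d` this is a quadratic
polynomial in `s`. Interpolating between almost minimizing curves from `p` to `p₁` and to `p₂`
(which end at the same point of `ℂⁿ`) therefore reaches every height between `t_{p₁}` and
`t_{p₂}` by the intermediate value theorem, and the norm of the interpolated velocity is at most
the convex combination of the two speeds. The same quadratic dependence, for a segment perturbed
by a loop of nonzero signed area, shows that any two points are joined by a horizontal curve when
`n ≥ 1`, so the infima defining the distances are taken over nonempty sets. -/

open Complex ComplexConjugate

lemma exists_quadratic_eq_zero_of_mul_nonpos {a b c : ℝ} (ha : a ≠ 0) (hac : a * c ≤ 0) :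
    ∃ x, a * (x * x) + b * x + c = 0 :=
  exists_quadratic_eq_zero ha ⟨√(discrim a b c),
    (Real.mul_self_sqrt (by rw [discrim]; nlinarith [sq_nonneg b])).symm⟩

lemma integral_norm_add_smul_sub_le_max {E : Type*} [NormedAddCommGroup E] [NormedSpace ℝ E]
    {f g : ℝ → E} {a b s : ℝ} (hf : IntervalIntegrable f MeasureTheory.volume a b)
    (hg : IntervalIntegrable g MeasureTheory.volume a b) (hab : a ≤ b)
    (hs : s ∈ Set.Icc (0 : ℝ) 1) :
    ∫ u in a..b, ‖f u + s • (g u - f u)‖ ≤ max (∫ u in a..b, ‖f u‖) (∫ u in a..b, ‖g u‖) := by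
  obtain ⟨hs₀, hs₁⟩ := hs
  have hf' := hf.norm.const_mul (1 - s)
  have hg' := hg.norm.const_mul s
  calc ∫ u in a..b, ‖f u + s • (g u - f u)‖
      ≤ ∫ u in a..b, ((1 - s) * ‖f u‖ + s * ‖g u‖) := by
        refine intervalIntegral.integral_mono_on hab (hf.add ((hg.sub hf).smul s)).norm
          (hf'.add hg') fun u _ => ?_
        rw [show f u + s • (g u - f u) = (1 - s) • f u + s • g u by module]
        exact (convexOn_norm convex_univ).2 trivial trivial (by linarith) hs₀ (by ring)
    _ = (1 - s) • (∫ u in a..b, ‖f u‖) + s • ∫ u in a..b, ‖g u‖ := by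
        rw [intervalIntegral.integral_add hf' hg', intervalIntegral.integral_const_mul,
          intervalIntegral.integral_const_mul, smul_eq_mul, smul_eq_mul]
    _ ≤ max (∫ u in a..b, ‖f u‖) (∫ u in a..b, ‖g u‖) :=
        Convex.combo_le_max _ _ (by linarith) hs₀ (by ring)

/-- A loop in `ℂ` based at `0` whose signed area has the sign of `-σ`. -/
def areaLoop (σ u : ℝ) : ℂ := u * (1 - u) * (1 + u * (σ * I))

def areaLoopDeriv (σ u : ℝ) : ℂ := (1 - 2 * u) * (1 + u * (σ * I)) + u * (1 - u) * (σ * I)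

lemma hasDerivAt_areaLoop (σ u : ℝ) : HasDerivAt (areaLoop σ) (areaLoopDeriv σ u) u := by
  have h : HasDerivAt (fun v : ℝ => (v : ℂ)) 1 u := (hasDerivAt_id u).ofReal_comp
  exact ((h.mul (h.const_sub 1)).mul ((h.mul_const _).const_add 1)).congr_deriv
    (by simp only [areaLoopDeriv, Pi.mul_apply]; ring)

lemma continuous_areaLoopDeriv (σ : ℝ) : Continuous (areaLoopDeriv σ) := by
  unfold areaLoopDeriv
  fun_prop

lemma im_areaLoop_mul_conj (σ u : ℝ) :
    (areaLoop σ u * conj (areaLoopDeriv σ u)).im = -σ * (u * (1 - u)) ^ 2 := by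
  simp [areaLoop, areaLoopDeriv, Complex.mul_im, Complex.mul_re]
  ring

lemma integral_sq_mul_one_sub_pos : 0 < ∫ u in (0 : ℝ)..1, (u * (1 - u)) ^ 2 :=
  intervalIntegral.intervalIntegral_pos_of_pos_on (Continuous.intervalIntegrable (by fun_prop) _ _)
    (fun u ⟨h₀, h₁⟩ => by have := sub_pos.2 h₁; positivity) zero_lt_one

namespace Heis

open scoped InnerProductSpace

variable {n : ℕ}

lemma herm_eq_inner (z w : EuclideanSpace ℂ (Fin n)) : herm z w = ⟪w, z⟫_ℂ := by
  simp [herm, PiLp.inner_apply]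

lemma herm_smul_single_smul_single (j : Fin n) (a b : ℂ) :
    herm (a • EuclideanSpace.single j 1) (b • EuclideanSpace.single j 1) = a * conj b := by
  simp [herm, PiLp.single_apply]

lemma im_herm_add_smul (a a' d d' : EuclideanSpace ℂ (Fin n)) (s : ℝ) :
    (herm (a + s • d) (a' + s • d')).im =
      (herm a a').im + s * ((herm a d').im + (herm d a').im) + s ^ 2 * (herm d d').im := by
  simp only [herm_eq_inner, inner_add_left, inner_add_right, ← Complex.coe_smul,
    inner_smul_left, inner_smul_right, Complex.conj_ofReal, Complex.add_im, Complex.im_ofReal_mul]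
  ring

lemma continuous_im_herm {z w : ℝ → EuclideanSpace ℂ (Fin n)} (hz : Continuous z)
    (hw : Continuous w) : Continuous fun u => (herm (z u) (w u)).im := by
  simp only [herm_eq_inner]
  exact Complex.continuous_im.comp (hw.inner hz)

def vertDisp (z z' : ℝ → EuclideanSpace ℂ (Fin n)) : ℝ :=
  ∫ u in (0 : ℝ)..1, 2 * (herm (z u) (z' u)).im

lemma vertDisp_add_smul {z z' d d' : ℝ → EuclideanSpace ℂ (Fin n)} (hz : Continuous z)
    (hz' : Continuous z') (hd : Continuous d) (hd' : Continuous d') (s : ℝ) :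
    vertDisp (z + s • d) (z' + s • d') =
      vertDisp z z' + s * (vertDisp z d' + vertDisp d z') + s ^ 2 * vertDisp d d' := by
  have hi : ∀ {f g : ℝ → EuclideanSpace ℂ (Fin n)}, Continuous f → Continuous g →
      IntervalIntegrable (fun u => 2 * (herm (f u) (g u)).im) MeasureTheory.volume 0 1 :=
    fun hf hg => (continuous_const.mul (continuous_im_herm hf hg)).intervalIntegrable _ _
  have hlin := ((hi hz hd').add (hi hd hz')).const_mul s
  simp only [vertDisp]
  rw [← intervalIntegral.integral_add (hi hz hd') (hi hd hz'),
    ← intervalIntegral.integral_const_mul, ← intervalIntegral.integral_const_mul,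
    ← intervalIntegral.integral_add (hi hz hz') hlin,
    ← intervalIntegral.integral_add ((hi hz hz').add hlin) ((hi hd hd').const_mul _)]
  congr 1 with u
  simp only [Pi.add_apply, Pi.smul_apply, im_herm_add_smul]
  ring

lemma vertDisp_areaLoop_smul_single (j : Fin n) (σ : ℝ) :
    vertDisp (fun u => areaLoop σ u • EuclideanSpace.single j 1)
      (fun u => areaLoopDeriv σ u • EuclideanSpace.single j 1) =
      -(2 * σ) * ∫ u in (0 : ℝ)..1, (u * (1 - u)) ^ 2 := by
  simp only [vertDisp, herm_smul_single_smul_single, im_areaLoop_mul_conj,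
    ← intervalIntegral.integral_const_mul]
  congr 1 with u
  ring

namespace HorizCurve

structure Joins (γ : HorizCurve n) (p q : Heis n) : Prop where
  z_zero : γ.z 0 = p.1
  t_zero : γ.t 0 = p.2
  z_one : γ.z 1 = q.1
  t_one : γ.t 1 = q.2

lemma continuous_z (γ : HorizCurve n) : Continuous γ.z :=
  Differentiable.continuous fun u => (γ.hz u).differentiableAt

lemma t_one_eq (γ : HorizCurve n) : γ.t 1 = γ.t 0 + vertDisp γ.z γ.z' := by
  rw [vertDisp, intervalIntegral.integral_eq_sub_of_hasDerivAt (fun u _ => γ.ht u)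
    ((continuous_const.mul (continuous_im_herm γ.continuous_z γ.hz')).intervalIntegrable _ _)]
  ring

lemma length_nonneg (γ : HorizCurve n) : 0 ≤ γ.length :=
  intervalIntegral.integral_nonneg zero_le_one fun _ _ => norm_nonneg _

def lift (z z' : ℝ → EuclideanSpace ℂ (Fin n)) (hz : ∀ u, HasDerivAt z (z' u) u)
    (hz' : Continuous z') (t₀ : ℝ) : HorizCurve n where
  z := z
  t u := t₀ + ∫ s in (0 : ℝ)..u, 2 * (herm (z s) (z' s)).im
  z' := z'
  hz := hz
  ht u := by
    have hc : Continuous fun s => 2 * (herm (z s) (z' s)).im :=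
      continuous_const.mul (continuous_im_herm
        (Differentiable.continuous fun u => (hz u).differentiableAt) hz')
    exact (hc.integral_hasStrictDerivAt 0 u).hasDerivAt.const_add t₀
  hz' := hz'

section lift

variable {z z' : ℝ → EuclideanSpace ℂ (Fin n)} {hz : ∀ u, HasDerivAt z (z' u) u}
  {hz' : Continuous z'} {t₀ : ℝ}

@[simp] lemma lift_z : (lift z z' hz hz' t₀).z = z := rfl

@[simp] lemma lift_t_zero : (lift z z' hz hz' t₀).t 0 = t₀ := by simp [lift]

@[simp] lemma lift_t_one : (lift z z' hz hz' t₀).t 1 = t₀ + vertDisp z z' := rfl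

end lift

end HorizCurve

open HorizCurve

lemma ccDist_eq_sInf_length (p q : Heis n) :
    ccDist p q = sInf (length '' {γ | γ.Joins p q}) := by
  refine congrArg sInf (Set.ext fun L => ⟨?_, ?_⟩)
  · rintro ⟨γ, h0, h1, h2, h3, rfl⟩
    exact ⟨γ, ⟨h0, h1, h2, h3⟩, rfl⟩
  · rintro ⟨γ, ⟨h0, h1, h2, h3⟩, rfl⟩
    exact ⟨γ, h0, h1, h2, h3, rfl⟩

lemma ccDist_nonneg (p q : Heis n) : 0 ≤ ccDist p q := by
  rw [ccDist_eq_sInf_length]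
  exact Real.sInf_nonneg (Set.forall_mem_image.2 fun γ _ => γ.length_nonneg)

lemma ccDist_le_length {p q : Heis n} {γ : HorizCurve n} (h : γ.Joins p q) :
    ccDist p q ≤ γ.length := by
  rw [ccDist_eq_sInf_length]
  exact csInf_le ⟨0, Set.forall_mem_image.2 fun γ _ => γ.length_nonneg⟩ ⟨γ, h, rfl⟩

lemma exists_joins_length_lt {p q : Heis n} (h : ∃ γ : HorizCurve n, γ.Joins p q) {ε : ℝ}
    (hε : 0 < ε) : ∃ γ : HorizCurve n, γ.Joins p q ∧ γ.length < ccDist p q + ε := by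
  rw [ccDist_eq_sInf_length]
  obtain ⟨_, ⟨γ, hγ, rfl⟩, hlt⟩ := Real.lt_sInf_add_pos (Set.Nonempty.image length h) hε
  exact ⟨γ, hγ, hlt⟩

lemma ccDist_nonpos_of_dim_zero (p q : Heis 0) : ccDist p q ≤ 0 :=
  Real.sInf_nonpos fun _ ⟨γ, _, _, _, _, hL⟩ => by
    simp [hL, HorizCurve.length, Subsingleton.elim (γ.z' _) 0]

lemma exists_joins (hn : 0 < n) (p q : Heis n) : ∃ γ : HorizCurve n, γ.Joins p q := by
  set e : EuclideanSpace ℂ (Fin n) := EuclideanSpace.single ⟨0, hn⟩ 1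
  set z₀ : ℝ → EuclideanSpace ℂ (Fin n) := fun u => p.1 + u • (q.1 - p.1)
  set z₀' : ℝ → EuclideanSpace ℂ (Fin n) := fun _ => q.1 - p.1
  have hz₀ : ∀ u, HasDerivAt z₀ (z₀' u) u := fun u =>
    (((hasDerivAt_id u).smul_const (q.1 - p.1)).const_add p.1).congr_deriv (one_smul ℝ _)
  set c := p.2 + vertDisp z₀ z₀' - q.2
  -- orienting the loop by `σ` makes the quadratic equation for `s` below solvable
  obtain ⟨σ, hσ, hσc⟩ : ∃ σ : ℝ, σ ≠ 0 ∧ 0 ≤ σ * c := by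
    rcases le_total 0 c with hc | hc
    exacts [⟨1, one_ne_zero, by linarith⟩, ⟨-1, by norm_num, by linarith⟩]
  set v : ℝ → EuclideanSpace ℂ (Fin n) := fun u => areaLoop σ u • e
  set v' : ℝ → EuclideanSpace ℂ (Fin n) := fun u => areaLoopDeriv σ u • e
  have hv : ∀ u, HasDerivAt v (v' u) u := fun u => (hasDerivAt_areaLoop σ u).smul_const e
  have hv' : Continuous v' := (continuous_areaLoopDeriv σ).smul continuous_const
  have harea := vertDisp_areaLoop_smul_single ⟨0, hn⟩ σ
  have hK := integral_sq_mul_one_sub_pos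
  obtain ⟨s, hs⟩ := exists_quadratic_eq_zero_of_mul_nonpos (a := vertDisp v v')
    (b := vertDisp z₀ v' + vertDisp v z₀') (c := c)
    (by rw [harea]; exact mul_ne_zero (by simpa using hσ) hK.ne') (by rw [harea]; nlinarith)
  refine ⟨lift (z₀ + s • v) (z₀' + s • v') (fun u => (hz₀ u).add ((hv u).const_smul s))
    (continuous_const.add (hv'.const_smul s)) p.2, ⟨?_, ?_, ?_, ?_⟩⟩
  · simp [z₀, v, areaLoop]
  · simp
  · simp [z₀, v, areaLoop]
  · rw [lift_t_one, vertDisp_add_smul (by fun_prop) continuous_const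
      (Differentiable.continuous fun u => (hv u).differentiableAt) hv']
    linear_combination hs

lemma exists_joins_length_le_max {p p₁ p₂ q : Heis n} {γ₁ γ₂ : HorizCurve n}
    (h₁ : γ₁.Joins p p₁) (h₂ : γ₂.Joins p p₂) (hz : p₁.1 = p₂.1) (hq : q ∈ vseg p₁ p₂) :
    ∃ γ : HorizCurve n, γ.Joins p q ∧ γ.length ≤ max γ₁.length γ₂.length := by
  set d := γ₂.z - γ₁.z
  set d' := γ₂.z' - γ₁.z'
  have hdd : ∀ u, HasDerivAt d (d' u) u := fun u => (γ₂.hz u).sub (γ₁.hz u)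
  have hd : Continuous d := γ₂.continuous_z.sub γ₁.continuous_z
  have hd' : Continuous d' := γ₂.hz'.sub γ₁.hz'
  have hderiv : ∀ (s : ℝ) u, HasDerivAt (γ₁.z + s • d) ((γ₁.z' + s • d') u) u := fun s u =>
    (γ₁.hz u).add ((hdd u).const_smul s)
  have hcont : ∀ s : ℝ, Continuous (γ₁.z' + s • d') := fun s => γ₁.hz'.add (hd'.const_smul s)
  set T : ℝ → ℝ := fun s => p.2 + vertDisp (γ₁.z + s • d) (γ₁.z' + s • d')
  have hT : Continuous T := by
    simp only [T, vertDisp_add_smul γ₁.continuous_z γ₁.hz' hd hd']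
    fun_prop
  have hT0 : T 0 = p₁.2 := by simp [T, ← h₁.t_one, γ₁.t_one_eq, h₁.t_zero]
  have hT1 : T 1 = p₂.2 := by simp [T, d, d', ← h₂.t_one, γ₂.t_one_eq, h₂.t_zero]
  obtain ⟨s, hs, hTs⟩ := intermediate_value_uIcc hT.continuousOn (hT0 ▸ hT1 ▸ hq.2)
  rw [Set.uIcc_of_le zero_le_one] at hs
  refine ⟨lift _ _ (hderiv s) (hcont s) p.2, ⟨?_, ?_, ?_, hTs⟩, ?_⟩
  · simp [d, h₁.z_zero, h₂.z_zero]
  · simp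
  · simp [d, h₁.z_one, h₂.z_one, hz, hq.1]
  · exact integral_norm_add_smul_sub_le_max (γ₁.hz'.intervalIntegrable _ _)
      (γ₂.hz'.intervalIntegrable _ _) zero_le_one hs

lemma ccDist_le_max_of_mem_vseg {p p₁ p₂ q : Heis n} (h₁ : ∃ γ : HorizCurve n, γ.Joins p p₁)
    (h₂ : ∃ γ : HorizCurve n, γ.Joins p p₂) (hz : p₁.1 = p₂.1) (hq : q ∈ vseg p₁ p₂) :
    ccDist p q ≤ max (ccDist p p₁) (ccDist p p₂) := by
  refine le_of_forall_pos_lt_add fun ε hε => ?_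
  obtain ⟨γ₁, hγ₁, hlt₁⟩ := exists_joins_length_lt h₁ hε
  obtain ⟨γ₂, hγ₂, hlt₂⟩ := exists_joins_length_lt h₂ hε
  obtain ⟨γ, hγ, hle⟩ := exists_joins_length_le_max hγ₁ hγ₂ hz hq
  calc ccDist p q ≤ γ.length := ccDist_le_length hγ
    _ ≤ max γ₁.length γ₂.length := hle
    _ < max (ccDist p p₁ + ε) (ccDist p p₂ + ε) := max_lt_max hlt₁ hlt₂
    _ = max (ccDist p p₁) (ccDist p p₂) + ε := max_add_add_right _ _ _

end Heis

/-- For any `p` and any `p₁, p₂` with `z_{p₁} = z_{p₂}`, every point `q` on the vertical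
segment joining `p₁` to `p₂` satisfies `d(p,q) ≤ max (d(p,p₁)) (d(p,p₂))`. -/
theorem stmt9 (n : ℕ) (p p₁ p₂ : Heis n) (hz : p₁.1 = p₂.1) :
    ∀ q ∈ Heis.vseg p₁ p₂,
      Heis.ccDist p q ≤ max (Heis.ccDist p p₁) (Heis.ccDist p p₂) := by
  intro q hq
  rcases Nat.eq_zero_or_pos n with rfl | hn
  · exact (Heis.ccDist_nonpos_of_dim_zero p q).trans
      ((Heis.ccDist_nonneg p p₁).trans (le_max_left _ _))
  · exact Heis.ccDist_le_max_of_mem_vseg (Heis.exists_joins hn p p₁)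
      (Heis.exists_joins hn p p₂) hz hq
end
end
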